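/- For centered reward deviations d_k(j) = r_k(j) − μ_k with σ_k > 0 and convex weights w_k, the identity ∑_k w_k d_k(j) = σ_sum A_sum(j) = S · A_DVAO(j) holds for every j, where S = ∑_k w_k σ_k, so A_DVAO(j) = (σ_sum / S) A_sum(j); i.e., DVAO is a uniform rescaling of the reward-combination advantage by the factor σ_sum/S ∈ (0, 1]. -/

import Mathlib

open Finset

noncomputable def gMean (G : ℕ) (r : Fin G → ℝ) : ℝ := (∑ j, r j) / G
noncomputable def gVar (G : ℕ) (r : Fin G → ℝ) : ℝ := (∑ j, (r j - gMean G r)^2) / G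
noncomputable def gStd (G : ℕ) (r : Fin G → ℝ) : ℝ := Real.sqrt (gVar G r)
noncomputable def gCov (G : ℕ) (u v : Fin G → ℝ) : ℝ :=
  (∑ j, (u j - gMean G u) * (v j - gMean G v)) / G
noncomputable def stdAdv (G : ℕ) (r : Fin G → ℝ) (j : Fin G) : ℝ :=
  (r j - gMean G r) / gStd G r


/-! Both advantages are rescalings of the same centered combination `∑ k, w k * (r k - μ k)`:
centering is linear and `σ_k * A_k = r_k - μ_k`. As a map into Euclidean space, centering turns
`gStd` into `‖·‖ / √G`, so the triangle inequality gives `σ_sum ≤ ∑ k, w k * σ_k` for nonnegative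
weights. -/

section WeightedCombination

variable {ι : Type*} [Fintype ι] {G : ℕ}

noncomputable def centered (G : ℕ) (r : Fin G → ℝ) : EuclideanSpace ℝ (Fin G) :=
  WithLp.toLp 2 fun j => r j - gMean G r

lemma gStd_eq_norm_centered (r : Fin G → ℝ) : gStd G r = ‖centered G r‖ / √G := by
  rw [gStd, gVar, Real.sqrt_div' _ (Nat.cast_nonneg G), EuclideanSpace.norm_eq]
  simp only [centered, Real.norm_eq_abs, sq_abs]

lemma gStd_mul_stdAdv (r : Fin G → ℝ) (j : Fin G) :
    gStd G r * stdAdv G r j = r j - gMean G r := by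
  by_cases hσ : gStd G r = 0
  · -- a zero standard deviation forces every deviation to vanish, matching `x / 0 = 0`
    have hG : (G : ℝ) ≠ 0 := Nat.cast_ne_zero.2 (Fin.pos j).ne'
    have hc : centered G r = 0 ∨ √(G : ℝ) = 0 := by
      rwa [gStd_eq_norm_centered, div_eq_zero_iff, norm_eq_zero] at hσ
    rcases hc with hc | hG'
    · simpa [centered, hσ] using (congrArg (· j) hc).symm
    · exact absurd (Real.sqrt_eq_zero (Nat.cast_nonneg G) |>.1 hG') hG
  · rw [stdAdv, mul_div_cancel₀ _ hσ]

lemma gMean_weighted_sum (w : ι → ℝ) (r : ι → Fin G → ℝ) :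
    gMean G (fun j => ∑ k, w k * r k j) = ∑ k, w k * gMean G (r k) := by
  simp only [gMean, Finset.sum_comm (γ := Fin G), Finset.sum_div, ← Finset.mul_sum,
    mul_div_assoc]

lemma weighted_sum_sub_gMean (w : ι → ℝ) (r : ι → Fin G → ℝ) (j : Fin G) :
    ∑ k, w k * (r k j - gMean G (r k)) =
      (∑ k, w k * r k j) - gMean G (fun j' => ∑ k, w k * r k j') := by
  simp only [gMean_weighted_sum, mul_sub, Finset.sum_sub_distrib]

lemma centered_weighted_sum (w : ι → ℝ) (r : ι → Fin G → ℝ) :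
    centered G (fun j => ∑ k, w k * r k j) = ∑ k, w k • centered G (r k) := by
  ext j
  simp [centered, weighted_sum_sub_gMean]

lemma gStd_weighted_sum_le {w : ι → ℝ} (hw : ∀ k, 0 ≤ w k) (r : ι → Fin G → ℝ) :
    gStd G (fun j => ∑ k, w k * r k j) ≤ ∑ k, w k * gStd G (r k) := by
  simp only [gStd_eq_norm_centered, centered_weighted_sum, ← mul_div_assoc, ← Finset.sum_div]
  gcongr
  calc ‖∑ k, w k • centered G (r k)‖
      ≤ ∑ k, ‖w k • centered G (r k)‖ := norm_sum_le _ _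
    _ = ∑ k, w k * ‖centered G (r k)‖ := by
      simp only [norm_smul, Real.norm_of_nonneg (hw _)]

end WeightedCombination

theorem stmt16_general (n G : ℕ) (r : Fin n → Fin G → ℝ) (w : Fin n → ℝ)
    (hσsum : 0 < gStd G (fun j => ∑ k, w k * r k j))
    (hw : ∀ k, 0 ≤ w k) :
    (∀ j, ∑ k, w k * (r k j - gMean G (r k))
        = gStd G (fun j' => ∑ k, w k * r k j')
          * stdAdv G (fun j' => ∑ k, w k * r k j') j) ∧
    (∀ j, ∑ k, w k * (r k j - gMean G (r k))
        = (∑ k, w k * gStd G (r k))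
          * ((∑ k, w k * gStd G (r k) * stdAdv G (r k) j) / (∑ k, w k * gStd G (r k)))) ∧
    (∀ j, (∑ k, w k * gStd G (r k) * stdAdv G (r k) j) / (∑ k, w k * gStd G (r k))
        = (gStd G (fun j' => ∑ k, w k * r k j') / (∑ k, w k * gStd G (r k)))
          * stdAdv G (fun j' => ∑ k, w k * r k j') j) ∧
    (0 < gStd G (fun j' => ∑ k, w k * r k j') / (∑ k, w k * gStd G (r k))) ∧
    (gStd G (fun j' => ∑ k, w k * r k j') / (∑ k, w k * gStd G (r k)) ≤ 1) := by
  have hcomb : ∀ j, ∑ k, w k * (r k j - gMean G (r k)) =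
      gStd G (fun j' => ∑ k, w k * r k j') * stdAdv G (fun j' => ∑ k, w k * r k j') j := by
    intro j
    rw [gStd_mul_stdAdv, weighted_sum_sub_gMean]
  have hdvao : ∀ j, ∑ k, w k * gStd G (r k) * stdAdv G (r k) j =
      ∑ k, w k * (r k j - gMean G (r k)) := by
    intro j
    simp only [mul_assoc, gStd_mul_stdAdv]
  have hle := gStd_weighted_sum_le hw r
  have hS : 0 < ∑ k, w k * gStd G (r k) := hσsum.trans_le hle
  refine ⟨hcomb, fun j => ?_, fun j => ?_, div_pos hσsum hS, (div_le_one hS).2 hle⟩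
  · rw [hdvao, mul_div_cancel₀ _ hS.ne']
  · rw [hdvao, hcomb]
    ring

theorem stmt16 (n G : ℕ) (hG : 0 < G) (r : Fin n → Fin G → ℝ) (w : Fin n → ℝ)
    (hσ : ∀ k, 0 < gStd G (r k))
    (hσsum : 0 < gStd G (fun j => ∑ k, w k * r k j))
    (hw : ∀ k, 0 ≤ w k) (hwsum : ∑ k, w k = 1) :
    (∀ j, ∑ k, w k * (r k j - gMean G (r k))
        = gStd G (fun j' => ∑ k, w k * r k j')
          * stdAdv G (fun j' => ∑ k, w k * r k j') j) ∧
    (∀ j, ∑ k, w k * (r k j - gMean G (r k))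
        = (∑ k, w k * gStd G (r k))
          * ((∑ k, w k * gStd G (r k) * stdAdv G (r k) j) / (∑ k, w k * gStd G (r k)))) ∧
    (∀ j, (∑ k, w k * gStd G (r k) * stdAdv G (r k) j) / (∑ k, w k * gStd G (r k))
        = (gStd G (fun j' => ∑ k, w k * r k j') / (∑ k, w k * gStd G (r k)))
          * stdAdv G (fun j' => ∑ k, w k * r k j') j) ∧
    (0 < gStd G (fun j' => ∑ k, w k * r k j') / (∑ k, w k * gStd G (r k))) ∧
    (gStd G (fun j' => ∑ k, w k * r k j') / (∑ k, w k * gStd G (r k)) ≤ 1) :=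
  stmt16_general n G r w hσsum hw
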